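/- Let $T$ be a banded semi-infinite matrix with two superdiagonals and three subdiagonals and nonvanishing extreme diagonals ($T_{n+3,n} \cdot T_{n,n+2} \neq 0$). Let $Q_{n,N}$ and $R_{n,N}$ be the determinantal polynomials built from the left recursion polynomials $A_n^a$ ($a \in \{1,2,3\}$) and right recursion polynomials $B_n^b$ ($b \in \{1,2\}$), respectively, and let $P_N$ denote the characteristic polynomial of $T^{[N-1]}$, with $\alpha_N = T_{3,0}\cdots T_{N+2,N-1}$ and $\beta_N = (-1)^N T_{0,2}\cdots T_{N-1,N+1}$. Then the generalized Christoffel–Darboux formula holds: for $x \neq y$, $\sum_{n=0}^{N} Q_{n,N}(x) R_{n,N}(y) = \frac{1}{\alpha_N \beta_N} \cdot \frac{P_{N+1}(x) P_N(y) - P_N(x) P_{N+1}(y)}{x - y}$. -/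

import Mathlib

/-!
Since `n ↦ Q_{n,N}(x)` is a combination of the left solutions `A^a` and `n ↦ R_{n,N}(y)` one of
the right solutions `B^b`, the Christoffel–Darboux telescoping of
`∑_{n ≤ N} ((Q T)ₙ Rₙ - Qₙ (T R)ₙ) = (x - y) ∑_{n ≤ N} Qₙ Rₙ` leaves only the boundary terms
`T_{N+3,N} Q_{N+3,N} R_{N,N} - T_{N,N+2} Q_{N,N} R_{N+2,N}`, which are products of determinants
of consecutive recursion polynomials: `det A_{N+1} det B_N` and `det A_N det B_{N+1}`.

These are turned into characteristic polynomials by a complementary-minor identity: the `k` rows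
`A^a`, cut off at `M + k`, annihilate the first `M` columns of `x - T`, so
`det ν · det (x - T)_{[0,M)} = ± det (x - T)_{[k,k+M) × [0,M)} · det A_M`, and the middle factor is
triangular with diagonal `-T_{n+k,n}` by the band structure. Transposing gives `P_M = β_M det B_M`.
-/
open Finset Matrix

theorem val_finRotate_pow_apply (n k : ℕ) (i : Fin n) :
    ((finRotate n ^ k) i : ℕ) = (i + k) % n := by
  rcases Nat.eq_zero_or_pos n with rfl | hn
  · exact i.elim0
  have : NeZero n := ⟨hn.ne'⟩
  induction k with
  | zero => simp [Nat.mod_eq_of_lt i.isLt]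
  | succ k ih =>
    rw [pow_succ', Equiv.Perm.mul_apply, finRotate_apply, Fin.val_add, ih, Fin.val_one',
      ← Nat.add_mod, ← add_assoc]

theorem sign_finRotate_pow (k M : ℕ) :
    (Equiv.Perm.sign (finRotate (k + M) ^ k) : ℤ) = (-1) ^ (k * M) := by
  rw [map_pow, sign_finRotate]
  push_cast
  rw [← pow_mul]
  rcases k with _ | k
  · simp
  · rw [show (k + 1 + M - 1) * (k + 1) = (k + 1) * M + k * (k + 1) by
      rw [show k + 1 + M - 1 = M + k by omega]; ring,
      pow_add, (Nat.even_mul_succ_self k).neg_one_pow, mul_one]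

variable {R : Type*} [CommRing R]

theorem det_of_rows_lt_eq_det {k M : ℕ} (V : Fin k → ℕ → R) :
    det (of fun i j : Fin (k + M) =>
      if h : (i : ℕ) < k then V ⟨i, h⟩ j else if i = j then 1 else 0) =
      det (of fun a b : Fin k => V a b) := by
  rw [← det_submatrix_equiv_self finSumFinEquiv]
  convert det_fromBlocks_zero₂₁ (of fun a b : Fin k => V a b)
    (of fun (a : Fin k) (r : Fin M) => V a (k + r)) 1 using 2
  · ext (a | r) (b | s) <;> simp [Fin.ext_iff, one_apply]; omega
  · simp

theorem det_of_cols_lt_eq_det {k M : ℕ} (H : ℕ → ℕ → R) :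
    det (of fun i j : Fin (k + M) => if (j : ℕ) < M then H i j else if i = j then 1 else 0) =
      det (of fun i j : Fin M => H i j) := by
  rw [← det_submatrix_equiv_self (finSumFinEquiv.trans (finCongr (Nat.add_comm M k)))]
  convert det_fromBlocks_zero₁₂ (of fun i j : Fin M => H i j)
    (of fun (a : Fin k) (j : Fin M) => H (M + a) j) 1 using 2
  · ext (a | r) (b | s) <;> simp [Fin.ext_iff, one_apply, add_comm]; omega
  · simp

theorem det_mul_det_eq_of_sum_mul_eq_zero {k M : ℕ} (V : Fin k → ℕ → R) (H : ℕ → ℕ → R)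
    (hVH : ∀ a, ∀ j < M, ∑ i ∈ range (k + M), V a i * H i j = 0) :
    det (of fun a b : Fin k => V a b) * det (of fun i j : Fin M => H i j) =
      (-1) ^ (k * M) * det (of fun i j : Fin M => H (k + i) j) *
        det (of fun a b : Fin k => V a (M + b)) := by
  -- `Y = [V; 0 1]` and `X = [H | 0; 1]`; moving the first `k` rows of `Y * X` to the bottom
  -- makes it block upper triangular, the lower-left block being `V H = 0`.
  set Y : Matrix (Fin (k + M)) (Fin (k + M)) R :=
    of fun i j => if h : (i : ℕ) < k then V ⟨i, h⟩ j else if i = j then 1 else 0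
  set X : Matrix (Fin (k + M)) (Fin (k + M)) R :=
    of fun i j => if (j : ℕ) < M then H i j else if i = j then 1 else 0
  set σ := finRotate (k + M) ^ k
  have hYX_low (p q : Fin (k + M)) (hp : k ≤ p) : (Y * X) p q = X p q := by
    simp [Y, mul_apply, not_lt.2 hp]
  have hYX_up (p q : Fin (k + M)) (a : Fin k) (hp : (p : ℕ) = a) :
      (Y * X) p q = ∑ i : Fin (k + M), V a i * X i q := by
    simp [Y, mul_apply, hp]
  set e : Fin M ⊕ Fin k ≃ Fin (k + M) := finSumFinEquiv.trans (finCongr (Nat.add_comm M k))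
  have he_l (r : Fin M) : (e (.inl r) : ℕ) = r := rfl
  have he_r (a : Fin k) : (e (.inr a) : ℕ) = M + a := rfl
  have hσ_l (r : Fin M) : (σ (e (.inl r)) : ℕ) = k + r := by
    rw [val_finRotate_pow_apply, he_l, Nat.mod_eq_of_lt (by omega), add_comm]
  have hσ_r (a : Fin k) : (σ (e (.inr a)) : ℕ) = a := by
    rw [val_finRotate_pow_apply, he_r, show M + a + k = a + (k + M) by ring, Nat.add_mod_right,
      Nat.mod_eq_of_lt (by omega)]
  have hblocks : ((Y * X).submatrix σ id).submatrix e e =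
      fromBlocks (of fun i j : Fin M => H (k + i) j)
        (of fun (r : Fin M) (b : Fin k) => if k + (r : ℕ) = M + b then 1 else 0) 0
        (of fun a b : Fin k => V a (M + b)) := by
    ext (r | a) (j | b) <;> simp only [submatrix_apply, id]
    · rw [hYX_low _ _ (by rw [hσ_l]; omega)]
      simp [X, hσ_l, he_l]
    · rw [hYX_low _ _ (by rw [hσ_l]; omega)]
      simp [X, he_r, hσ_l, Fin.ext_iff]
    · rw [hYX_up _ _ a (hσ_r a)]
      simp only [X, of_apply, he_l, j.isLt, if_true]
      rw [Fin.sum_univ_eq_sum_range (fun i => V a i * H i j)]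
      exact hVH a j j.isLt
    · rw [hYX_up _ _ a (hσ_r a)]
      simp only [X, of_apply, he_r, Fin.ext_iff, add_lt_iff_neg_left, not_lt_zero, if_false,
        mul_ite, mul_one, mul_zero]
      rw [Fin.sum_univ_eq_sum_range (fun i => if i = M + b then V a i else 0),
        sum_ite_eq', if_pos (mem_range.2 (by omega))]
      rfl
  have hdet := congrArg det hblocks
  rw [det_submatrix_equiv_self, det_permute, det_mul, det_of_rows_lt_eq_det,
    det_of_cols_lt_eq_det, det_fromBlocks_zero₂₁, sign_finRotate_pow] at hdet
  push_cast at hdet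
  rw [mul_assoc, ← hdet, ← mul_assoc, ← pow_add, ← two_mul, pow_mul, neg_one_sq, one_pow, one_mul]

/-- `x - T^{[M-1]}`: the leading `M × M` block of `x - T`. -/
def truncCharMatrix (T : ℕ → ℕ → R) (x : R) (M : ℕ) : Matrix (Fin M) (Fin M) R :=
  of fun i j => (if (i : ℕ) = j then x else 0) - T i j

/-- Rows are indexed by the recursion index `n`, columns by the family index `a`, so that
`rowDet A (M + ·)` is the paper's `det A_M`. -/
def rowDet {k : ℕ} (A : Fin k → ℕ → R) (rows : Fin k → ℕ) : R :=
  det (of fun r a => A a (rows r))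

theorem rowDet_eq_det {k : ℕ} (A : Fin k → ℕ → R) (rows : Fin k → ℕ) :
    rowDet A rows = det (of fun a b => A a (rows b)) := by
  rw [rowDet, ← det_transpose]
  rfl

theorem det_shiftedRows_charMatrix {p : ℕ} (hp : 0 < p) (T : ℕ → ℕ → R)
    (hT : ∀ i j, j + p < i → T i j = 0) (x : R) (M : ℕ) :
    det (of fun i j : Fin M => (if p + (i : ℕ) = j then x else 0) - T (p + i) j) =
      (-1) ^ M * ∏ k ∈ range M, T (k + p) k := by
  rw [det_of_isUpperTriangular]
  · rw [show (-1) ^ M * ∏ k ∈ range M, T (k + p) k = ∏ k ∈ range M, -T (k + p) k by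
      rw [prod_neg, card_range], ← Fin.prod_univ_eq_prod_range (fun k => -T (k + p) k)]
    refine Fintype.prod_congr _ _ fun i => ?_
    simp [hp.ne', add_comm]
  · intro i j hij
    simp only [id] at hij
    simp [show p + (i : ℕ) ≠ j by omega, hT _ _ (show (j : ℕ) + p < p + i by omega)]

theorem rowDet_mul_det_truncCharMatrix_of_left {p : ℕ} (hp : 0 < p) (T : ℕ → ℕ → R)
    (hT : ∀ i j, j + p < i → T i j = 0) (A : Fin p → ℕ → R) (x : R)
    (hA : ∀ a n m, n + p < m → ∑ i ∈ range m, A a i * T i n = x * A a n) (M : ℕ) :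
    rowDet A (fun b => b) * det (truncCharMatrix T x M) =
      (-1) ^ ((p + 1) * M) * (∏ k ∈ range M, T (k + p) k) * rowDet A (fun b => M + b) := by
  have hker (a : Fin p) (j : ℕ) (hj : j < M) :
      ∑ i ∈ range (p + M), A a i * ((if i = j then x else 0) - T i j) = 0 := by
    simp_rw [mul_sub, sum_sub_distrib, mul_ite, mul_zero, sum_ite_eq',
      if_pos (mem_range.2 (show j < p + M by omega)), hA a j (p + M) (by omega)]
    ring
  have h := det_mul_det_eq_of_sum_mul_eq_zero A _ hker
  rw [det_shiftedRows_charMatrix hp T hT x M] at h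
  rw [rowDet_eq_det, rowDet_eq_det, truncCharMatrix, h, add_mul, one_mul, pow_add]
  ring

theorem rowDet_mul_det_truncCharMatrix_of_right {q : ℕ} (hq : 0 < q) (T : ℕ → ℕ → R)
    (hT : ∀ i j, i + q < j → T i j = 0) (B : Fin q → ℕ → R) (x : R)
    (hB : ∀ b n m, n + q < m → ∑ j ∈ range m, T n j * B b j = x * B b n) (M : ℕ) :
    rowDet B (fun c => c) * det (truncCharMatrix T x M) =
      (-1) ^ ((q + 1) * M) * (∏ k ∈ range M, T k (k + q)) * rowDet B (fun c => M + c) := by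
  have htranspose : (truncCharMatrix T x M)ᵀ = truncCharMatrix (fun i j => T j i) x M := by
    ext i j
    simp [truncCharMatrix, eq_comm]
  rw [← det_transpose (truncCharMatrix T x M), htranspose]
  exact rowDet_mul_det_truncCharMatrix_of_left hq _ (fun i j h => hT j i h) B x
    (fun b n m h => by simpa only [mul_comm] using hB b n m h) M

theorem det_truncCharMatrix_eq_of_left_three (T : ℕ → ℕ → R)
    (hT : ∀ i j, j + 3 < i → T i j = 0) (A : Fin 3 → ℕ → R) (x : R)
    (hA : ∀ a n m, n + 3 < m → ∑ i ∈ range m, A a i * T i n = x * A a n)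
    (hinit : rowDet A (fun a => a) = 1) (M : ℕ) :
    det (truncCharMatrix T x M) = (∏ k ∈ range M, T (k + 3) k) * rowDet A (fun a => M + a) := by
  have h := rowDet_mul_det_truncCharMatrix_of_left three_pos T hT A x hA M
  rwa [hinit, one_mul, pow_mul, show (-1 : R) ^ (3 + 1) = 1 by norm_num, one_pow, one_mul] at h

theorem det_truncCharMatrix_eq_of_right_two (T : ℕ → ℕ → R)
    (hT : ∀ i j, i + 2 < j → T i j = 0) (B : Fin 2 → ℕ → R) (x : R)
    (hB : ∀ b n m, n + 2 < m → ∑ j ∈ range m, T n j * B b j = x * B b n)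
    (hinit : rowDet B (fun b => b) = 1) (M : ℕ) :
    det (truncCharMatrix T x M) =
      ((-1) ^ M * ∏ k ∈ range M, T k (k + 2)) * rowDet B (fun b => M + b) := by
  have h := rowDet_mul_det_truncCharMatrix_of_right two_pos T hT B x hB M
  rwa [hinit, one_mul, pow_mul, show (-1 : R) ^ (2 + 1) = -1 by norm_num] at h

theorem sum_mul_rowDet_cons {k : ℕ} (A : Fin (k + 1) → ℕ → R) (s : Finset ℕ) (w : ℕ → R)
    (rows : Fin k → ℕ) (c : R) (n : ℕ) (h : ∀ a, ∑ i ∈ s, w i * A a i = c * A a n) :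
    ∑ i ∈ s, w i * rowDet A (Fin.cons i rows) = c * rowDet A (Fin.cons n rows) := by
  simp_rw [rowDet, det_succ_row_zero, mul_sum, of_apply, Fin.cons_zero]
  rw [sum_comm]
  refine sum_congr rfl fun a _ => ?_
  set minor := det ((of fun r b => A b (rows r)).submatrix id a.succAbove)
  have hminor (i : ℕ) :
      (of fun r b => A b ((Fin.cons i rows : Fin (k + 1) → ℕ) r)).submatrix Fin.succ a.succAbove =
        (of fun r b => A b (rows r)).submatrix id a.succAbove := by
    ext; simp
  simp_rw [hminor]
  calc _ = (∑ i ∈ s, w i * A a i) * ((-1) ^ (a : ℕ) * minor) := by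
        rw [sum_mul]; exact sum_congr rfl fun i _ => by ring
    _ = _ := by rw [h a]; ring

theorem rowDet_eq_zero_of_eq {k : ℕ} (A : Fin k → ℕ → R) (rows : Fin k → ℕ) {i j : Fin k}
    (hij : i ≠ j) (h : rows i = rows j) : rowDet A rows = 0 :=
  det_zero_of_row_eq hij (by ext; simp [h])

theorem sum_range_add_four (f : ℕ → R) (N : ℕ) :
    ∑ i ∈ range (N + 4), f i =
      ∑ i ∈ range (N + 1), f i + (f (N + 1) + f (N + 2) + f (N + 3)) := by
  rw [show N + 4 = N + 1 + 1 + 1 + 1 from rfl, sum_range_succ, sum_range_succ, sum_range_succ]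
  ring

theorem sub_mul_sum_mul_eq_of_banded (T : ℕ → ℕ → R)
    (hlow : ∀ i j, j + 3 < i → T i j = 0) (hup : ∀ i j, i + 2 < j → T i j = 0)
    (q r : ℕ → R) (x y : R) (N : ℕ)
    (hq : ∀ n ≤ N, ∑ i ∈ range (N + 4), q i * T i n = x * q n)
    (hr : ∀ n ≤ N, ∑ j ∈ range (N + 4), T n j * r j = y * r n)
    (hq₁ : q (N + 1) = 0) (hq₂ : q (N + 2) = 0) (hr₁ : r (N + 1) = 0) :
    (x - y) * ∑ n ∈ range (N + 1), q n * r n =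
      T (N + 3) N * q (N + 3) * r N - T N (N + 2) * q N * r (N + 2) := by
  have hN : N ∈ range (N + 1) := self_mem_range_succ N
  have hrow : ∑ n ∈ range (N + 1), q (N + 3) * T (N + 3) n * r n =
      q (N + 3) * T (N + 3) N * r N :=
    sum_eq_single_of_mem N hN fun n hn _ => by
      rw [hlow _ _ (by rw [mem_range] at hn; omega), mul_zero, zero_mul]
  have hcol : ∑ n ∈ range (N + 1), q n * T n (N + 2) * r (N + 2) =
      q N * T N (N + 2) * r (N + 2) :=
    sum_eq_single_of_mem N hN fun n hn _ => by
      rw [hup _ _ (by rw [mem_range] at hn; omega), mul_zero, zero_mul]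
  have hcol' : ∑ n ∈ range (N + 1), q n * T n (N + 3) * r (N + 3) = 0 :=
    sum_eq_zero fun n hn => by rw [hup _ _ (by rw [mem_range] at hn; omega), mul_zero, zero_mul]
  calc (x - y) * ∑ n ∈ range (N + 1), q n * r n
      = ∑ n ∈ range (N + 1), ((∑ i ∈ range (N + 4), q i * T i n) * r n
          - q n * ∑ j ∈ range (N + 4), T n j * r j) := by
        rw [mul_sum]
        refine sum_congr rfl fun n hn => ?_
        rw [mem_range] at hn
        rw [hq n (by omega), hr n (by omega)]
        ring
    _ = ∑ n ∈ range (N + 1), ∑ i ∈ range (N + 4), q i * T i n * r n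
        - ∑ n ∈ range (N + 1), ∑ j ∈ range (N + 4), q n * T n j * r j := by
        simp_rw [sum_sub_distrib, sum_mul, mul_sum, mul_assoc]
    _ = _ := by
        simp_rw [sum_range_add_four, sum_add_distrib, hq₁, hq₂, hr₁]
        rw [sum_comm]
        simp only [hrow, hcol, hcol', zero_mul, mul_zero, sum_const_zero]
        ring

theorem sub_mul_sum_rowDet_mul_rowDet (T : ℕ → ℕ → R)
    (hlow : ∀ i j, j + 3 < i → T i j = 0) (hup : ∀ i j, i + 2 < j → T i j = 0)
    (A : Fin 3 → ℕ → R) (B : Fin 2 → ℕ → R) (x y : R)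
    (hA : ∀ a n m, n + 3 < m → ∑ i ∈ range m, A a i * T i n = x * A a n)
    (hB : ∀ b n m, n + 2 < m → ∑ j ∈ range m, T n j * B b j = y * B b n) (N : ℕ) :
    (x - y) * ∑ n ∈ range (N + 1), rowDet A ![n, N + 1, N + 2] * rowDet B ![n, N + 1] =
      T (N + 3) N * rowDet A (fun a => N + 1 + a) * rowDet B (fun b => N + b) +
        T N (N + 2) * rowDet A (fun a => N + a) * rowDet B (fun b => N + 1 + b) := by
  have hcycle : rowDet A ![N + 3, N + 1, N + 2] = rowDet A (fun a => N + 1 + a) := by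
    simp [rowDet, det_fin_three]
    ring
  have hswap : rowDet B ![N + 2, N + 1] = -rowDet B (fun b => N + 1 + b) := by
    simp [rowDet, det_fin_two]
    ring
  have hA_N : rowDet A ![N, N + 1, N + 2] = rowDet A (fun a => N + a) :=
    congrArg _ (funext fun a => by fin_cases a <;> rfl)
  have hB_N : rowDet B ![N, N + 1] = rowDet B (fun b => N + b) :=
    congrArg _ (funext fun b => by fin_cases b <;> rfl)
  rw [sub_mul_sum_mul_eq_of_banded T hlow hup (fun n => rowDet A ![n, N + 1, N + 2])
    (fun n => rowDet B ![n, N + 1]) x y N ?_ ?_ ?_ ?_ ?_, hcycle, hswap, hA_N, hB_N]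
  · ring
  · intro n hn
    simp_rw [mul_comm _ (T _ n)]
    exact sum_mul_rowDet_cons A _ _ _ x n fun a => by
      simp_rw [mul_comm (T _ n)]
      exact hA a n _ (by omega)
  · intro n hn
    exact sum_mul_rowDet_cons B _ _ _ y n fun b => hB b n _ (by omega)
  · exact rowDet_eq_zero_of_eq A _ (i := 0) (j := 1) (by decide) rfl
  · exact rowDet_eq_zero_of_eq A _ (i := 0) (j := 2) (by decide) rfl
  · exact rowDet_eq_zero_of_eq B _ (i := 0) (j := 1) (by decide) rfl

theorem tsum_mul_eq_sum_range_of_lowerBand [TopologicalSpace R] {p : ℕ} (T : ℕ → ℕ → R)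
    (hT : ∀ i j, j + p < i → T i j = 0) (f : ℕ → R) {n m : ℕ} (hm : n + p < m) :
    ∑' i, f i * T i n = ∑ i ∈ range m, f i * T i n :=
  tsum_eq_sum fun i hi => by rw [hT i n (by simp at hi; omega), mul_zero]

theorem tsum_mul_eq_sum_range_of_upperBand [TopologicalSpace R] {q : ℕ} (T : ℕ → ℕ → R)
    (hT : ∀ i j, i + q < j → T i j = 0) (f : ℕ → R) {n m : ℕ} (hm : n + q < m) :
    ∑' j, T n j * f j = ∑ j ∈ range m, T n j * f j :=
  tsum_eq_sum fun j hj => by rw [hT n j (by simp at hj; omega), zero_mul]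

theorem stmt16_general (T : ℕ → ℕ → ℝ)
    (hband : ∀ i j : ℕ, (j + 3 < i ∨ i + 2 < j) → T i j = 0)
    (hext : ∀ n : ℕ, T (n+3) n ≠ 0 ∧ T n (n+2) ≠ 0)
    (A : Fin 3 → ℕ → ℝ → ℝ) (B : Fin 2 → ℕ → ℝ → ℝ)
    (hBrec : ∀ (b : Fin 2) (n : ℕ) (x : ℝ), ∑' j : ℕ, T n j * B b j x = x * B b n x)
    (hArec : ∀ (a : Fin 3) (n : ℕ) (x : ℝ), ∑' i : ℕ, A a i x * T i n = x * A a n x)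
    (hB00 : ∀ x, B 0 0 x = 1) (hB10 : ∀ x, B 1 0 x = 0) (hB11 : ∀ x, B 1 1 x = 1)
    (hA00 : ∀ x, A 0 0 x = 1) (hA10 : ∀ x, A 1 0 x = 0) (hA11 : ∀ x, A 1 1 x = 1)
    (hA20 : ∀ x, A 2 0 x = 0) (hA21 : ∀ x, A 2 1 x = 0) (hA22 : ∀ x, A 2 2 x = 1)
    (P : ℕ → ℝ → ℝ)
    (hP : ∀ (M : ℕ) (x : ℝ), P M x =
      Matrix.det (Matrix.of fun i j : Fin M =>
        (if (i : ℕ) = (j : ℕ) then x else 0) - T i j))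
    (α β : ℕ → ℝ)
    (hα : ∀ M, α M = ∏ k ∈ Finset.range M, T (k+3) k)
    (hβ : ∀ M, β M = (-1)^M * ∏ k ∈ Finset.range M, T k (k+2))
    (Q R : ℕ → ℕ → ℝ → ℝ)
    (hQ : ∀ n M x, Q n M x = Matrix.det
      !![A 0 n x, A 1 n x, A 2 n x;
         A 0 (M+1) x, A 1 (M+1) x, A 2 (M+1) x;
         A 0 (M+2) x, A 1 (M+2) x, A 2 (M+2) x])
    (hR : ∀ n M x, R n M x = Matrix.det
      !![B 0 n x, B 1 n x; B 0 (M+1) x, B 1 (M+1) x])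
    (N : ℕ) (x y : ℝ) (hxy : x ≠ y) :
    ∑ n ∈ Finset.range (N+1), Q n N x * R n N y =
      (1 / (α N * β N)) * ((P (N+1) x * P N y - P N x * P (N+1) y) / (x - y)) := by
  have hlow : ∀ i j, j + 3 < i → T i j = 0 := fun i j h => hband i j (.inl h)
  have hup : ∀ i j, i + 2 < j → T i j = 0 := fun i j h => hband i j (.inr h)
  have hA (a : Fin 3) (n m : ℕ) (hm : n + 3 < m) :
      ∑ i ∈ range m, A a i x * T i n = x * A a n x := by
    rw [← hArec, tsum_mul_eq_sum_range_of_lowerBand T hlow _ hm]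
  have hB (b : Fin 2) (n m : ℕ) (hm : n + 2 < m) :
      ∑ j ∈ range m, T n j * B b j y = y * B b n y := by
    rw [← hBrec, tsum_mul_eq_sum_range_of_upperBand T hup _ hm]
  have hPx (M : ℕ) : P M x = α M * rowDet (fun a i => A a i x) (fun a => M + a) := by
    rw [hP, hα]
    exact det_truncCharMatrix_eq_of_left_three T hlow _ x hA
      (by simp [rowDet, det_fin_three, hA00, hA10, hA11, hA20, hA21, hA22]) M
  have hPy (M : ℕ) : P M y = β M * rowDet (fun b i => B b i y) (fun b => M + b) := by
    rw [hP, hβ]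
    exact det_truncCharMatrix_eq_of_right_two T hup _ y hB
      (by simp [rowDet, det_fin_two, hB00, hB10, hB11]) M
  have hα0 : α N ≠ 0 := by rw [hα]; exact prod_ne_zero_iff.2 fun k _ => (hext k).1
  have hβ0 : β N ≠ 0 := by
    rw [hβ]; exact mul_ne_zero (by simp) (prod_ne_zero_iff.2 fun k _ => (hext k).2)
  have hα_succ : α (N + 1) = α N * T (N + 3) N := by rw [hα, hα, prod_range_succ]
  have hβ_succ : β (N + 1) = -(β N * T N (N + 2)) := by
    rw [hβ, hβ, prod_range_succ, pow_succ]
    ring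
  have hQR : ∀ n, Q n N x * R n N y =
      rowDet (fun a i => A a i x) ![n, N + 1, N + 2] * rowDet (fun b i => B b i y) ![n, N + 1] :=
    fun n => by rw [hQ, hR]; rfl
  rw [sum_congr rfl fun n _ => hQR n, hPx, hPx, hPy, hPy, hα_succ, hβ_succ]
  field_simp [sub_ne_zero.2 hxy]
  linear_combination sub_mul_sum_rowDet_mul_rowDet T hlow hup _ _ x y hA hB N

/-- Generalized Christoffel–Darboux formula for a banded matrix with two
superdiagonals and three subdiagonals. -/
theorem stmt16 (T : ℕ → ℕ → ℝ)
    (hband : ∀ i j : ℕ, (j + 3 < i ∨ i + 2 < j) → T i j = 0)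
    (hext : ∀ n : ℕ, T (n+3) n ≠ 0 ∧ T n (n+2) ≠ 0)
    (A : Fin 3 → ℕ → ℝ → ℝ) (B : Fin 2 → ℕ → ℝ → ℝ)
    (hBrec : ∀ (b : Fin 2) (n : ℕ) (x : ℝ), ∑' j : ℕ, T n j * B b j x = x * B b n x)
    (hArec : ∀ (a : Fin 3) (n : ℕ) (x : ℝ), ∑' i : ℕ, A a i x * T i n = x * A a n x)
    (hB00 : ∀ x, B 0 0 x = 1) (hB10 : ∀ x, B 1 0 x = 0) (hB11 : ∀ x, B 1 1 x = 1)
    (ξ : ℝ) (hB01 : ∀ x, B 0 1 x = ξ)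
    (hA00 : ∀ x, A 0 0 x = 1) (hA10 : ∀ x, A 1 0 x = 0) (hA11 : ∀ x, A 1 1 x = 1)
    (hA20 : ∀ x, A 2 0 x = 0) (hA21 : ∀ x, A 2 1 x = 0) (hA22 : ∀ x, A 2 2 x = 1)
    (ν11 ν12 ν22 : ℝ)
    (hA01 : ∀ x, A 0 1 x = ν11) (hA02 : ∀ x, A 0 2 x = ν12)
    (hA12 : ∀ x, A 1 2 x = ν22)
    (P : ℕ → ℝ → ℝ)
    (hP : ∀ (M : ℕ) (x : ℝ), P M x =
      Matrix.det (Matrix.of fun i j : Fin M =>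
        (if (i : ℕ) = (j : ℕ) then x else 0) - T i j))
    (α β : ℕ → ℝ)
    (hα : ∀ M, α M = ∏ k ∈ Finset.range M, T (k+3) k)
    (hβ : ∀ M, β M = (-1)^M * ∏ k ∈ Finset.range M, T k (k+2))
    (Q R : ℕ → ℕ → ℝ → ℝ)
    (hQ : ∀ n M x, Q n M x = Matrix.det
      !![A 0 n x, A 1 n x, A 2 n x;
         A 0 (M+1) x, A 1 (M+1) x, A 2 (M+1) x;
         A 0 (M+2) x, A 1 (M+2) x, A 2 (M+2) x])
    (hR : ∀ n M x, R n M x = Matrix.det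
      !![B 0 n x, B 1 n x; B 0 (M+1) x, B 1 (M+1) x])
    (N : ℕ) (x y : ℝ) (hxy : x ≠ y) :
    ∑ n ∈ Finset.range (N+1), Q n N x * R n N y =
      (1 / (α N * β N)) * ((P (N+1) x * P N y - P N x * P (N+1) y) / (x - y)) :=
  stmt16_general T hband hext A B hBrec hArec hB00 hB10 hB11 hA00 hA10 hA11 hA20 hA21 hA22 P hP α β
    hα hβ Q R hQ hR N x y hxy
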